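/- Let S⁺, S⁻ ⊆ ℝ^d be nonempty sets and suppose the optimization problem max{h(y,b;S⁺,S⁻) : ‖y‖_* ≤ 1, b ∈ ℝ} has an optimal solution and its optimal value is positive. Then every optimal solution (ŷ,b̂) satisfies ‖ŷ‖_* = 1. If, in addition, both ‖·‖ and its dual norm ‖·‖_* are strictly convex (‖βw+(1−β)z‖ < β‖w‖+(1−β)‖z‖ whenever β ∈ (0,1) and w,z are not collinear, and likewise for ‖·‖_*), then the optimal solution is unique. -/
import Mathlib


noncomputable section
open scoped Classical
open scoped RealInnerProductSpace

/-- Feature space: `ℝ^d` with the Euclidean (`ℓ₂`) norm as ambient norm. -/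
abbrev E (d : ℕ) : Type := EuclideanSpace ℝ (Fin d)

/-- Sign function with the convention `sgn 0 = +1`. -/
def sgn (t : ℝ) : ℝ := if 0 ≤ t then 1 else -1

/-- Dual norm `‖y‖_* = max { ⟪y,x⟫ : ‖x‖ ≤ 1 }` of a (semi)norm `p`. -/
def dualNorm {d : ℕ} (p : Seminorm ℝ (E d)) (y : E d) : ℝ :=
  sSup ((fun x => ⟪y, x⟫) '' {x | p x ≤ 1})

/-- Predicted label `p̂(x,y,b) = sgn(⟪y,x⟫ + b - 2‖y‖_*/c)`. -/
def pred {d : ℕ} (p : Seminorm ℝ (E d)) (c : ℝ) (x y : E d) (b : ℝ) : ℝ :=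
  sgn (⟪y, x⟫ + b - 2 * dualNorm p y / c)

/-- Agent response `r(A,y,b)`. -/
def resp {d : ℕ} (p : Seminorm ℝ (E d)) (v : E d → E d) (c : ℝ)
    (A y : E d) (b : ℝ) : E d :=
  if y ≠ 0 ∧ 0 ≤ (⟪y, A⟫ + b) / dualNorm p y ∧ (⟪y, A⟫ + b) / dualNorm p y < 2 / c
  then A + (2 / c - (⟪y, A⟫ + b) / dualNorm p y) • v y
  else A

/-- Proxy point `s(A,y,b)`. -/
def proxy {d : ℕ} (p : Seminorm ℝ (E d)) (v : E d → E d) (lbl : E d → ℝ) (c : ℝ)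
    (A y : E d) (b : ℝ) : E d :=
  if y ≠ 0 ∧ 0 ≤ (⟪y, A⟫ + b) / dualNorm p y ∧ (⟪y, A⟫ + b) / dualNorm p y < 2 / c
      ∧ lbl A = -1
  then A - ((⟪y, A⟫ + b) / dualNorm p y) • v y
  else resp p v c A y b

/-- Margin function `h(y,b;S⁺,S⁻)`. -/
def marginFn {d : ℕ} (Sp Sm : Set (E d)) (y : E d) (b : ℝ) : ℝ :=
  min (sInf ((fun x => ⟪y, x⟫ + b) '' Sp)) (sInf ((fun x => -⟪y, x⟫ - b) '' Sm))

/-- Strict convexity of a norm-like function: the triangle inequality is strict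
on non-collinear vectors. -/
def StrictlyConvexFn {d : ℕ} (N : E d → ℝ) : Prop :=
  ∀ w z : E d, (¬ ∃ t : ℝ, w = t • z ∨ z = t • w) →
    ∀ β : ℝ, 0 < β → β < 1 →
      N (β • w + (1 - β) • z) < β * N w + (1 - β) * N z



lemma seminorm_sum_le {d : ℕ} (p : Seminorm ℝ (E d)) {ι : Type*} (s : Finset ι) (f : ι → E d) :
    p (∑ i ∈ s, f i) ≤ ∑ i ∈ s, p (f i) := by
  classical
  induction s using Finset.cons_induction with
  | empty => simp
  | cons a s ha ih =>
    rw [Finset.sum_cons, Finset.sum_cons]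
    exact le_trans (map_add_le_add p _ _) (by linarith)

lemma abs_coord_le {d : ℕ} (x : E d) (i : Fin d) : |x i| ≤ ‖x‖ := by
  have h1 : x i = ⟪EuclideanSpace.single i (1:ℝ), x⟫ := by
    rw [EuclideanSpace.inner_single_left]; simp
  calc |x i| = |⟪EuclideanSpace.single i (1:ℝ), x⟫| := by rw [h1]
  _ ≤ ‖EuclideanSpace.single i (1:ℝ)‖ * ‖x‖ := abs_real_inner_le_norm _ _
  _ = ‖x‖ := by rw [EuclideanSpace.norm_single]; simp

lemma seminorm_le_const {d : ℕ} (p : Seminorm ℝ (E d)) :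
    ∃ C : ℝ, 0 < C ∧ ∀ x : E d, p x ≤ C * ‖x‖ := by
  refine ⟨(∑ i, p (EuclideanSpace.single i (1:ℝ))) + 1, by positivity, fun x => ?_⟩
  have hx : x = ∑ i, x i • EuclideanSpace.single i (1:ℝ) := by
    have := (EuclideanSpace.basisFun (Fin d) ℝ).sum_repr x
    simpa [EuclideanSpace.basisFun_apply, EuclideanSpace.basisFun_repr] using this.symm
  calc p x = p (∑ i, x i • EuclideanSpace.single i (1:ℝ)) := by rw [← hx]
  _ ≤ ∑ i, p (x i • EuclideanSpace.single i (1:ℝ)) := seminorm_sum_le p _ _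
  _ = ∑ i, |x i| * p (EuclideanSpace.single i (1:ℝ)) := by
      simp [map_smul_eq_mul, Real.norm_eq_abs]
  _ ≤ ∑ i, ‖x‖ * p (EuclideanSpace.single i (1:ℝ)) := by
      refine Finset.sum_le_sum fun i _ => mul_le_mul_of_nonneg_right (abs_coord_le x i) (apply_nonneg p _)
  _ = (∑ i, p (EuclideanSpace.single i (1:ℝ))) * ‖x‖ := by rw [Finset.sum_mul]; exact Finset.sum_congr rfl fun i _ => mul_comm _ _
  _ ≤ ((∑ i, p (EuclideanSpace.single i (1:ℝ))) + 1) * ‖x‖ := by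
      have := norm_nonneg x; nlinarith

lemma seminorm_lower {d : ℕ} (hd : 1 ≤ d) (p : Seminorm ℝ (E d))
    (hpdef : ∀ x : E d, p x = 0 → x = 0) :
    ∃ m : ℝ, 0 < m ∧ ∀ x : E d, m * ‖x‖ ≤ p x := by
  obtain ⟨C, hC, hCb⟩ := seminorm_le_const p
  have hlip : LipschitzWith (Real.toNNReal C) (fun x : E d => p x) := by
    refine LipschitzWith.of_dist_le_mul fun x y => ?_
    rw [Real.dist_eq, dist_eq_norm]
    have h1 : p x ≤ p y + p (x - y) := by
      have := map_add_le_add p y (x - y); simpa using this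
    have h2 : p y ≤ p x + p (x - y) := by
      have := map_add_le_add p x (y - x)
      have h3 : p (y - x) = p (x - y) := by rw [← map_neg_eq_map p (y - x)]; congr 1; abel
      simp only [add_sub_cancel] at this; linarith
    have h4 := hCb (x - y)
    have : |p x - p y| ≤ p (x - y) := abs_sub_le_iff.mpr ⟨by linarith, by linarith⟩
    calc |p x - p y| ≤ C * ‖x - y‖ := le_trans this h4
    _ = (Real.toNNReal C : ℝ) * ‖x - y‖ := by rw [Real.coe_toNNReal _ hC.le]
  have hcont : Continuous fun x : E d => p x := hlip.continuous
  have hsne : (Metric.sphere (0 : E d) 1).Nonempty := by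
    refine ⟨EuclideanSpace.single ⟨0, hd⟩ (1:ℝ), ?_⟩
    simp [EuclideanSpace.norm_single]
  obtain ⟨z, hz, hzmin⟩ := (isCompact_sphere (0 : E d) 1).exists_isMinOn hsne hcont.continuousOn
  have hz1 : ‖z‖ = 1 := by simpa using hz
  have hz0 : z ≠ 0 := by intro h; rw [h] at hz1; simp at hz1
  have hpz : 0 < p z := by
    rcases (apply_nonneg p z).lt_or_eq with h | h
    · exact h
    · exact absurd (hpdef z h.symm) hz0
  refine ⟨p z, hpz, fun x => ?_⟩
  rcases eq_or_ne x 0 with rfl | hx0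
  · simp
  · have hxn : 0 < ‖x‖ := norm_pos_iff.mpr hx0
    have hu : ‖x‖⁻¹ • x ∈ Metric.sphere (0 : E d) 1 := by
      simp [norm_smul, abs_of_pos (inv_pos.mpr hxn), inv_mul_cancel₀ hxn.ne']
    have := hzmin hu
    have hval : p (‖x‖⁻¹ • x) = ‖x‖⁻¹ * p x := by
      rw [map_smul_eq_mul]; simp [abs_of_pos (inv_pos.mpr hxn)]
    simp only [IsMinOn, IsMinFilter] at hzmin
    have h5 : p z ≤ ‖x‖⁻¹ * p x := by rw [← hval]; exact this
    calc p z * ‖x‖ ≤ (‖x‖⁻¹ * p x) * ‖x‖ := by nlinarith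
    _ = p x := by field_simp



lemma img_nonempty {d : ℕ} (p : Seminorm ℝ (E d)) (y : E d) :
    ((fun x => ⟪y, x⟫) '' {x | p x ≤ 1}).Nonempty :=
  ⟨⟪y, (0 : E d)⟫, ⟨0, by simp [Set.mem_setOf_eq], rfl⟩⟩

lemma img_bddAbove {d : ℕ} (p : Seminorm ℝ (E d)) {m : ℝ} (hm : 0 < m)
    (hmb : ∀ x : E d, m * ‖x‖ ≤ p x) (y : E d) :
    BddAbove ((fun x => ⟪y, x⟫) '' {x | p x ≤ 1}) := by
  refine ⟨‖y‖ * m⁻¹, fun a ha => ?_⟩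
  obtain ⟨x, hx, rfl⟩ := ha
  have hx1 : ‖x‖ ≤ m⁻¹ := by
    have := hmb x
    have hx2 : p x ≤ 1 := hx
    rw [← one_div, le_div_iff₀ hm]; nlinarith [norm_nonneg x]
  calc ⟪y, x⟫ ≤ ‖y‖ * ‖x‖ := real_inner_le_norm y x
  _ ≤ ‖y‖ * m⁻¹ := mul_le_mul_of_nonneg_left hx1 (norm_nonneg y)

lemma csSup_mul_left {t : ℝ} (ht : 0 < t) {S : Set ℝ} (hS : S.Nonempty) (hb : BddAbove S) :
    sSup ((fun v => t * v) '' S) = t * sSup S := by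
  have hb2 : BddAbove ((fun v => t * v) '' S) := by
    obtain ⟨u, hu⟩ := hb
    exact ⟨t * u, fun a ⟨s, hs, he⟩ => he ▸ mul_le_mul_of_nonneg_left (hu hs) ht.le⟩
  refine le_antisymm (csSup_le (hS.image _) ?_) ?_
  · rintro a ⟨s, hs, rfl⟩
    exact mul_le_mul_of_nonneg_left (le_csSup hb hs) ht.le
  · have h1 : sSup S ≤ t⁻¹ * sSup ((fun v => t * v) '' S) := by
      refine csSup_le hS fun s hs => ?_
      have h2 : t * s ≤ sSup ((fun v => t * v) '' S) := le_csSup hb2 ⟨s, hs, rfl⟩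
      calc s = t⁻¹ * (t * s) := by field_simp
      _ ≤ t⁻¹ * sSup ((fun v => t * v) '' S) :=
        mul_le_mul_of_nonneg_left h2 (inv_pos.mpr ht).le
    calc t * sSup S ≤ t * (t⁻¹ * sSup ((fun v => t * v) '' S)) :=
      mul_le_mul_of_nonneg_left h1 ht.le
    _ = sSup ((fun v => t * v) '' S) := by field_simp

lemma dualNorm_nonneg {d : ℕ} (p : Seminorm ℝ (E d)) {m : ℝ} (hm : 0 < m)
    (hmb : ∀ x : E d, m * ‖x‖ ≤ p x) (y : E d) : 0 ≤ dualNorm p y := by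
  have := le_csSup (img_bddAbove p hm hmb y) (⟨0, by simp [Set.mem_setOf_eq], rfl⟩ :
    ⟪y, (0 : E d)⟫ ∈ (fun x => ⟪y, x⟫) '' {x | p x ≤ 1})
  simpa [dualNorm] using this

lemma dualNorm_smul {d : ℕ} (p : Seminorm ℝ (E d)) {m : ℝ} (hm : 0 < m)
    (hmb : ∀ x : E d, m * ‖x‖ ≤ p x) {t : ℝ} (ht : 0 ≤ t) (y : E d) :
    dualNorm p (t • y) = t * dualNorm p y := by
  rcases ht.lt_or_eq with htp | rfl
  · unfold dualNorm
    have himg : (fun x => ⟪t • y, x⟫) '' {x | p x ≤ 1} =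
        (fun v => t * v) '' ((fun x => ⟪y, x⟫) '' {x | p x ≤ 1}) := by
      rw [Set.image_image]
      exact Set.image_congr fun x _ => real_inner_smul_left y x t
    rw [himg, csSup_mul_left htp (img_nonempty p y) (img_bddAbove p hm hmb y)]
  · have himg : (fun x => ⟪(0 : ℝ) • y, x⟫) '' {x | p x ≤ 1} = {(0:ℝ)} := by
      have : (fun x : E d => ⟪(0 : ℝ) • y, x⟫) = fun _ => (0:ℝ) := by
        funext x; simp
      rw [this]
      exact Set.Nonempty.image_const ⟨0, by simp [Set.mem_setOf_eq]⟩ _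
    rw [dualNorm, himg, csSup_singleton, zero_mul]

lemma dualNorm_neg {d : ℕ} (p : Seminorm ℝ (E d)) (y : E d) : dualNorm p (-y) = dualNorm p y := by
  unfold dualNorm
  congr 1
  ext a
  constructor
  · rintro ⟨x, hx, rfl⟩
    exact ⟨-x, by simpa [Set.mem_setOf_eq, map_neg_eq_map] using hx, by simp⟩
  · rintro ⟨x, hx, rfl⟩
    exact ⟨-x, by simpa [Set.mem_setOf_eq, map_neg_eq_map] using hx, by simp⟩

lemma dualNorm_smul_abs {d : ℕ} (p : Seminorm ℝ (E d)) {m : ℝ} (hm : 0 < m)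
    (hmb : ∀ x : E d, m * ‖x‖ ≤ p x) (t : ℝ) (y : E d) :
    dualNorm p (t • y) = |t| * dualNorm p y := by
  rcases le_or_gt 0 t with ht | ht
  · rw [dualNorm_smul p hm hmb ht, abs_of_nonneg ht]
  · have : t • y = -((-t) • y) := by simp
    rw [this, dualNorm_neg, dualNorm_smul p hm hmb (by linarith : (0:ℝ) ≤ -t),
      abs_of_neg ht]

lemma dualNorm_add_le {d : ℕ} (p : Seminorm ℝ (E d)) {m : ℝ} (hm : 0 < m)
    (hmb : ∀ x : E d, m * ‖x‖ ≤ p x) (y z : E d) :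
    dualNorm p (y + z) ≤ dualNorm p y + dualNorm p z := by
  refine csSup_le (img_nonempty p _) ?_
  rintro a ⟨x, hx, rfl⟩
  have h1 : ⟪y, x⟫ ≤ dualNorm p y := le_csSup (img_bddAbove p hm hmb y) ⟨x, hx, rfl⟩
  have h2 : ⟪z, x⟫ ≤ dualNorm p z := le_csSup (img_bddAbove p hm hmb z) ⟨x, hx, rfl⟩
  calc ⟪y + z, x⟫ = ⟪y, x⟫ + ⟪z, x⟫ := inner_add_left y z x
  _ ≤ dualNorm p y + dualNorm p z := add_le_add h1 h2

lemma dualNorm_pos {d : ℕ} (p : Seminorm ℝ (E d)) (hpdef : ∀ x : E d, p x = 0 → x = 0)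
    {m : ℝ} (hm : 0 < m) (hmb : ∀ x : E d, m * ‖x‖ ≤ p x)
    {y : E d} (hy : y ≠ 0) : 0 < dualNorm p y := by
  have hpy : 0 < p y := by
    rcases (apply_nonneg p y).lt_or_eq with h | h
    · exact h
    · exact absurd (hpdef y h.symm) hy
  have hmem : ((p y)⁻¹ • y) ∈ {x : E d | p x ≤ 1} := by
    simp only [Set.mem_setOf_eq, map_smul_eq_mul, Real.norm_eq_abs,
      abs_of_pos (inv_pos.mpr hpy)]
    rw [inv_mul_cancel₀ hpy.ne']
  have h1 : ⟪y, (p y)⁻¹ • y⟫ ≤ dualNorm p y :=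
    le_csSup (img_bddAbove p hm hmb y) ⟨_, hmem, rfl⟩
  have h2 : ⟪y, (p y)⁻¹ • y⟫ = (p y)⁻¹ * ‖y‖ ^ 2 := by
    rw [real_inner_smul_right, real_inner_self_eq_norm_sq]
  have hyn : 0 < ‖y‖ := norm_pos_iff.mpr hy
  rw [h2] at h1
  have : 0 < (p y)⁻¹ * ‖y‖ ^ 2 := by positivity
  linarith

lemma margin_pointwise {d : ℕ} {Sp Sm : Set (E d)} {y : E d} {b dval : ℝ}
    (hdpos : 0 < dval) (h : dval ≤ marginFn Sp Sm y b) :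
    (∀ x ∈ Sp, dval ≤ ⟪y, x⟫ + b) ∧ (∀ x ∈ Sm, dval ≤ -⟪y, x⟫ - b) := by
  unfold marginFn at h
  have h1 : dval ≤ sInf ((fun x => ⟪y, x⟫ + b) '' Sp) := le_trans h (min_le_left _ _)
  have h2 : dval ≤ sInf ((fun x => -⟪y, x⟫ - b) '' Sm) := le_trans h (min_le_right _ _)
  constructor
  · intro x hx
    by_cases hbb : BddBelow ((fun x => ⟪y, x⟫ + b) '' Sp)
    · exact le_trans h1 (csInf_le hbb ⟨x, hx, rfl⟩)
    · rw [Real.sInf_of_not_bddBelow hbb] at h1; linarith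
  · intro x hx
    by_cases hbb : BddBelow ((fun x => -⟪y, x⟫ - b) '' Sm)
    · exact le_trans h2 (csInf_le hbb ⟨x, hx, rfl⟩)
    · rw [Real.sInf_of_not_bddBelow hbb] at h2; linarith

lemma margin_lower {d : ℕ} {Sp Sm : Set (E d)} (hSp : Sp.Nonempty) (hSm : Sm.Nonempty)
    {y : E d} {b c : ℝ}
    (h1 : ∀ x ∈ Sp, c ≤ ⟪y, x⟫ + b) (h2 : ∀ x ∈ Sm, c ≤ -⟪y, x⟫ - b) :
    c ≤ marginFn Sp Sm y b :=
  le_min (le_csInf (hSp.image _) (by rintro a ⟨x, hx, rfl⟩; exact h1 x hx))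
    (le_csInf (hSm.image _) (by rintro a ⟨x, hx, rfl⟩; exact h2 x hx))

/-- Lemma `unique-sol`: if the max-margin problem
`max { h(y,b;S⁺,S⁻) : ‖y‖_* ≤ 1, b ∈ ℝ }` is solvable with positive optimal value,
then every optimal solution `(ŷ,b̂)` satisfies `‖ŷ‖_* = 1`; and if both the norm
and its dual norm are strictly convex, the optimal solution is unique. -/
theorem maxmargin_unit_dual_norm_and_unique
    {d : ℕ} (hd : 1 ≤ d)
    (p : Seminorm ℝ (E d)) (hpdef : ∀ x : E d, p x = 0 → x = 0)
    (Sp Sm : Set (E d)) (hSp : Sp.Nonempty) (hSm : Sm.Nonempty)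
    (dval : ℝ) (hdpos : 0 < dval)
    (hsol : ∃ (yh : E d) (bh : ℝ), dualNorm p yh ≤ 1 ∧ marginFn Sp Sm yh bh = dval ∧
      ∀ (y : E d) (b : ℝ), dualNorm p y ≤ 1 → marginFn Sp Sm y b ≤ dval) :
    (∀ (yh : E d) (bh : ℝ), dualNorm p yh ≤ 1 → marginFn Sp Sm yh bh = dval →
      dualNorm p yh = 1) ∧
    ((StrictlyConvexFn (fun x => (p x : ℝ)) ∧ StrictlyConvexFn (dualNorm p)) →
      ∀ (yh : E d) (bh : ℝ) (yh' : E d) (bh' : ℝ),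
        dualNorm p yh ≤ 1 → marginFn Sp Sm yh bh = dval →
        dualNorm p yh' ≤ 1 → marginFn Sp Sm yh' bh' = dval →
        yh = yh' ∧ bh = bh') := by
  obtain ⟨m, hm, hmb⟩ := seminorm_lower hd p hpdef
  obtain ⟨y0, b0, hy0, hm0, hub⟩ := hsol
  have key1 : ∀ (yh : E d) (bh : ℝ), dualNorm p yh ≤ 1 → marginFn Sp Sm yh bh = dval →
      dualNorm p yh = 1 := by
    intro yh bh hle hval
    have hyne : yh ≠ 0 := by
      rintro rfl
      have he1 : (fun x : E d => ⟪(0 : E d), x⟫ + bh) '' Sp = {bh} := by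
        have he : (fun x : E d => ⟪(0 : E d), x⟫ + bh) = fun _ => bh := by
          funext x; simp
        rw [he, Set.Nonempty.image_const hSp]
      have he2 : (fun x : E d => -⟪(0 : E d), x⟫ - bh) '' Sm = {-bh} := by
        have he : (fun x : E d => -⟪(0 : E d), x⟫ - bh) = fun _ => -bh := by
          funext x; simp
        rw [he, Set.Nonempty.image_const hSm]
      unfold marginFn at hval
      rw [he1, he2, csInf_singleton, csInf_singleton] at hval
      have ha : dval ≤ bh := hval ▸ min_le_left bh (-bh)
      have hb : dval ≤ -bh := hval ▸ min_le_right bh (-bh)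
      linarith
    have hr : 0 < dualNorm p yh := dualNorm_pos p hpdef hm hmb hyne
    by_contra hne
    have hlt : dualNorm p yh < 1 := lt_of_le_of_ne hle hne
    set r := dualNorm p yh with hrdef
    have hti : 0 < r⁻¹ := inv_pos.mpr hr
    have ht1 : 1 < r⁻¹ := by
      have hrr : r * r⁻¹ = 1 := mul_inv_cancel₀ hr.ne'
      nlinarith
    have hd1 : dualNorm p (r⁻¹ • yh) = 1 := by
      rw [dualNorm_smul p hm hmb hti.le, ← hrdef, inv_mul_cancel₀ hr.ne']
    obtain ⟨hP, hM⟩ := margin_pointwise hdpos hval.ge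
    have hlow : r⁻¹ * dval ≤ marginFn Sp Sm (r⁻¹ • yh) (r⁻¹ * bh) := by
      refine margin_lower hSp hSm ?_ ?_
      · intro x hx
        rw [real_inner_smul_left]
        nlinarith [hP x hx]
      · intro x hx
        rw [real_inner_smul_left]
        nlinarith [hM x hx]
    have hup := hub (r⁻¹ • yh) (r⁻¹ * bh) (le_of_eq hd1)
    nlinarith
  refine ⟨key1, ?_⟩
  rintro ⟨-, hdsc⟩ yh bh yh' bh' h1 h2 h3 h4
  have e1 : dualNorm p yh = 1 := key1 yh bh h1 h2
  have e1' : dualNorm p yh' = 1 := key1 yh' bh' h3 h4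
  obtain ⟨hP, hM⟩ := margin_pointwise hdpos h2.ge
  obtain ⟨hP', hM'⟩ := margin_pointwise hdpos h4.ge
  set y2 : E d := (1/2 : ℝ) • (yh + yh') with hy2
  set b2 : ℝ := (bh + bh') / 2 with hb2
  have hd2 : dualNorm p y2 ≤ 1 := by
    rw [hy2, dualNorm_smul p hm hmb (by norm_num : (0:ℝ) ≤ 1/2)]
    have := dualNorm_add_le p hm hmb yh yh'
    rw [e1, e1'] at this; linarith
  have hm2 : marginFn Sp Sm y2 b2 = dval := by
    refine le_antisymm (hub y2 b2 hd2) ?_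
    refine margin_lower hSp hSm ?_ ?_
    · intro x hx
      have hi : ⟪y2, x⟫ = (1/2) * ⟪yh, x⟫ + (1/2) * ⟪yh', x⟫ := by
        rw [hy2, real_inner_smul_left, inner_add_left]; ring
      rw [hi, hb2]
      have := hP x hx; have := hP' x hx; linarith
    · intro x hx
      have hi : ⟪y2, x⟫ = (1/2) * ⟪yh, x⟫ + (1/2) * ⟪yh', x⟫ := by
        rw [hy2, real_inner_smul_left, inner_add_left]; ring
      rw [hi, hb2]
      have := hM x hx; have := hM' x hx; linarith
  have hd2e : dualNorm p y2 = 1 := key1 y2 b2 hd2 hm2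
  have hcol : ∃ t : ℝ, yh = t • yh' ∨ yh' = t • yh := by
    by_contra hnc
    have hsc := hdsc yh yh' hnc (1/2) (by norm_num) (by norm_num)
    have heq : (1/2 : ℝ) • yh + (1 - 1/2 : ℝ) • yh' = y2 := by
      rw [hy2, smul_add]; norm_num
    rw [heq, e1, e1', hd2e] at hsc
    norm_num at hsc
  have hyy : yh = yh' := by
    obtain ⟨t, ht | ht⟩ := hcol
    · have habs : |t| = 1 := by
        have hh := dualNorm_smul_abs p hm hmb t yh'
        rw [← ht, e1, e1', mul_one] at hh
        linarith
      have hmid : y2 = ((t + 1) / 2) • yh' := by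
        rw [hy2, ht, smul_add, smul_smul, ← add_smul]
        norm_num; ring_nf
      have habs2 : |(t + 1) / 2| = 1 := by
        have hh := dualNorm_smul_abs p hm hmb ((t + 1) / 2) yh'
        rw [← hmid, hd2e, e1', mul_one] at hh
        linarith
      rcases (abs_eq (by norm_num : (0:ℝ) ≤ 1)).mp habs with h | h
      · rw [ht, h, one_smul]
      · exfalso; rw [h] at habs2; norm_num at habs2
    · have habs : |t| = 1 := by
        have hh := dualNorm_smul_abs p hm hmb t yh
        rw [← ht, e1, e1', mul_one] at hh
        linarith
      have hmid : y2 = ((1 + t) / 2) • yh := by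
        rw [hy2, ht, smul_add, smul_smul, ← add_smul]
        norm_num; ring_nf
      have habs2 : |(1 + t) / 2| = 1 := by
        have hh := dualNorm_smul_abs p hm hmb ((1 + t) / 2) yh
        rw [← hmid, hd2e, e1, mul_one] at hh
        linarith
      rcases (abs_eq (by norm_num : (0:ℝ) ≤ 1)).mp habs with h | h
      · rw [ht, h, one_smul]
      · exfalso; rw [h] at habs2; norm_num at habs2
  refine ⟨hyy, ?_⟩
  rw [← hyy] at hP' hM'
  by_contra hbne
  rcases lt_or_gt_of_ne hbne with hblt | hblt
  · have hlow : dval + (bh' - bh) / 2 ≤ marginFn Sp Sm yh ((bh + bh') / 2) := by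
      refine margin_lower hSp hSm ?_ ?_
      · intro x hx; have := hP x hx; linarith
      · intro x hx; have := hM' x hx; linarith
    have hup := hub yh ((bh + bh') / 2) h1
    linarith
  · have hlow : dval + (bh - bh') / 2 ≤ marginFn Sp Sm yh ((bh + bh') / 2) := by
      refine margin_lower hSp hSm ?_ ?_
      · intro x hx; have := hP' x hx; linarith
      · intro x hx; have := hM x hx; linarith
    have hup := hub yh ((bh + bh') / 2) h1
    linarith
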